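/- Let U, V be unitaries on C^d (d an odd prime) forming a conjugate pair (U^d = V^d = I, UV = ωVU), with neither U nor V a scalar multiple of a Pauli gate. If the Pauli support of U is contained in a horizontal line {(p, q₀) : p} and the Pauli support of V is contained in a vertical line {(p₀, q) : q} of Z_d², then a contradiction follows; i.e., no such pair exists. -/

import Mathlib

open Matrix

noncomputable section

/-- ω = e^{2πi/d}, the primitive d-th root of unity. -/
def om (d : ℕ) : ℂ := Complex.exp (2 * Real.pi * Complex.I / d)

/-- The qudit Pauli Z gate: Z|z⟩ = ω^z |z⟩. -/
def Zg (d : ℕ) : Matrix (ZMod d) (ZMod d) ℂ :=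
  Matrix.diagonal fun z => om d ^ z.val

/-- The qudit Pauli X (shift) gate: X|z⟩ = |z+1⟩. -/
def Xg (d : ℕ) : Matrix (ZMod d) (ZMod d) ℂ :=
  fun i j => if i = j + 1 then 1 else 0

/-- The Weyl operator W(p,q) = ω^{-2⁻¹ p q} Z^p X^q. -/
def Wg (d : ℕ) [NeZero d] (p q : ZMod d) : Matrix (ZMod d) (ZMod d) ℂ :=
  om d ^ ((-(2 : ZMod d)⁻¹ * p * q).val) • (Zg d ^ p.val * Xg d ^ q.val)

/-- Pauli coefficient f_M(p,q) = d⁻¹ Tr(W(-p,-q) M). -/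
def fM (d : ℕ) [NeZero d] (M : Matrix (ZMod d) (ZMod d) ℂ) (p q : ZMod d) : ℂ :=
  (d : ℂ)⁻¹ * (Wg d (-p) (-q) * M).trace

end

/-!
Write `ψ = ZMod.stdAddChar`, so `ψ x = ω ^ x`. Fourier inversion along the diagonals of a matrix
shows that a Pauli support on the line `q = q₀` forces `U` to live on the diagonal `i = j + q₀`
(`U = D X^{q₀}` with `D` diagonal), and a support on the line `p = p₀` forces
`V i j = ψ(p₀ j) a(i - j)` (`V = Z^{p₀}` times a circulant). Comparing entries of `UV = ωVU` then
shows that the diagonal of `D` is invariant, up to the fixed factor `ω ψ(p₀ q₀)`, under translation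
by every `m` in the support of `a`. If that support is at most one point, `V` is a multiple of
`Z^{p₀} X^m`. Otherwise the diagonal of `D` is periodic with a nonzero period, hence constant since
`d` is prime, and `U` is a multiple of `X^{q₀}`.
-/

open ZMod

section Weyl

variable {d : ℕ} [NeZero d]

lemma om_pow_val (x : ZMod d) : om d ^ x.val = stdAddChar x := by
  rw [stdAddChar_apply, toCircle_apply, om, ← Complex.exp_nat_mul]
  congr 1
  ring

lemma ZMod.stdAddChar_ne_zero (x : ZMod d) : stdAddChar x ≠ 0 := Circle.coe_ne_zero _

lemma Xg_pow_apply (n : ℕ) (i j : ZMod d) :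
    (Xg d ^ n) i j = if i = j + n then 1 else 0 := by
  induction n generalizing i j with
  | zero => simp [one_apply]
  | succ n ih =>
    simp only [pow_succ, mul_apply, Xg, mul_ite, mul_one, mul_zero, Finset.sum_ite_eq',
      Finset.mem_univ, if_true, ih, Nat.cast_succ, add_assoc, add_comm (1 : ZMod d)]

lemma Zg_pow_val (p : ZMod d) : Zg d ^ p.val = diagonal fun z => stdAddChar (p * z) := by
  rw [Zg, diagonal_pow]
  congr 1
  ext z
  rw [Pi.pow_apply, om_pow_val, ← AddChar.map_nsmul_eq_pow, nsmul_eq_mul, natCast_zmod_val]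

lemma Zg_pow_mul_Xg_pow_apply (p q i j : ZMod d) :
    (Zg d ^ p.val * Xg d ^ q.val) i j = if i = j + q then stdAddChar (p * i) else 0 := by
  rw [Zg_pow_val, diagonal_mul, Xg_pow_apply, natCast_zmod_val, mul_ite, mul_one, mul_zero]

lemma eq_smul_Zg_pow_mul_Xg_pow {M : Matrix (ZMod d) (ZMod d) ℂ} {c : ℂ} {p q : ZMod d}
    (h : ∀ i j, M i j = if i = j + q then c * stdAddChar (p * i) else 0) :
    M = c • (Zg d ^ p.val * Xg d ^ q.val) := by
  ext i j
  rw [h, Matrix.smul_apply, Zg_pow_mul_Xg_pow_apply, smul_eq_mul, mul_ite, mul_zero]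

lemma trace_Zg_pow_mul_Xg_pow_mul (p q : ZMod d) (M : Matrix (ZMod d) (ZMod d) ℂ) :
    (Zg d ^ p.val * Xg d ^ q.val * M).trace = ∑ k, stdAddChar (p * (k + q)) * M k (k + q) := by
  simp only [trace, diag, Matrix.mul_apply (M := Zg d ^ p.val * Xg d ^ q.val) (N := M),
    Zg_pow_mul_Xg_pow_apply, ite_mul, zero_mul]
  rw [Finset.sum_comm]
  simp [Finset.sum_ite_eq']

lemma fM_eq_zero_iff (M : Matrix (ZMod d) (ZMod d) ℂ) (p q : ZMod d) :
    fM d M p q = 0 ↔ 𝓕 (fun k => M k (k - q)) p = 0 := by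
  have hsum : ∑ k, stdAddChar (-p * (k + -q)) * M k (k + -q)
      = stdAddChar (p * q) * 𝓕 (fun k => M k (k - q)) p := by
    rw [dft_apply, Finset.mul_sum]
    refine Finset.sum_congr rfl fun k _ => ?_
    rw [smul_eq_mul, ← mul_assoc, ← AddChar.map_add_eq_mul, ← sub_eq_add_neg]
    ring_nf
  rw [fM, Wg, om_pow_val, smul_mul, trace_smul, trace_Zg_pow_mul_Xg_pow_mul, hsum, smul_eq_mul]
  simp only [mul_eq_zero, NeZero.ne, stdAddChar_ne_zero, false_or]

lemma exists_eq_mul_stdAddChar_of_dft_eq_zero {g : ZMod d → ℂ} {p₀ : ZMod d}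
    (h : ∀ p, p ≠ p₀ → 𝓕 g p = 0) : ∃ C, ∀ k, g k = C * stdAddChar (p₀ * k) := by
  refine ⟨(d : ℂ)⁻¹ * 𝓕 g p₀, fun k => ?_⟩
  rw [← LinearEquiv.symm_apply_apply dft g, invDFT_apply, LinearEquiv.apply_symm_apply,
    Finset.sum_eq_single p₀ (fun p _ hp => by rw [h p hp, smul_zero]) (by simp), smul_eq_mul,
    smul_eq_mul]
  ring

lemma apply_eq_zero_of_fM_eq_zero {M : Matrix (ZMod d) (ZMod d) ℂ} {i j : ZMod d}
    (h : ∀ p, fM d M p (i - j) = 0) : M i j = 0 := by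
  have hdft : 𝓕 (fun k => M k (k - (i - j))) = 0 := funext fun p => (fM_eq_zero_iff M p _).1 (h p)
  simpa using congrFun ((LinearEquiv.map_eq_zero_iff dft).1 hdft) i

lemma apply_eq_of_fM_eq_zero {M : Matrix (ZMod d) (ZMod d) ℂ} {p₀ : ZMod d}
    (h : ∀ p q, p ≠ p₀ → fM d M p q = 0) (i j : ZMod d) :
    M i j = stdAddChar (p₀ * j) * M (i - j) 0 := by
  obtain ⟨C, hC⟩ := exists_eq_mul_stdAddChar_of_dft_eq_zero (g := fun k => M k (k - (i - j)))
    fun p hp => (fM_eq_zero_iff M p _).1 (h p _ hp)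
  have hi := hC i
  have hij := hC (i - j)
  simp only [sub_sub_cancel, sub_self] at hi hij
  rw [hi, hij, mul_left_comm, ← AddChar.map_add_eq_mul]
  ring_nf

end Weyl

section ShiftSupport

variable {ι R : Type*} [AddCommGroup ι] [Fintype ι] [NonUnitalNonAssocSemiring R]
  {U : Matrix ι ι R} {q : ι}

lemma mul_apply_of_apply_eq_zero (hU : ∀ i j, i ≠ j + q → U i j = 0) (M : Matrix ι ι R)
    (i j : ι) : (U * M) i j = U i (i - q) * M (i - q) j := by
  rw [mul_apply, Finset.sum_eq_single (i - q) (fun k _ hk => by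
    rw [hU i k (fun h => hk (by rw [h, add_sub_cancel_right])), zero_mul]) (by simp)]

lemma mul_apply_of_apply_eq_zero' (hU : ∀ i j, i ≠ j + q → U i j = 0) (M : Matrix ι ι R)
    (i j : ι) : (M * U) i j = M i (j + q) * U (j + q) j := by
  rw [mul_apply, Finset.sum_eq_single (j + q) (fun k _ hk => by rw [hU k j hk, mul_zero])
    (by simp)]

end ShiftSupport

lemma ZMod.apply_eq_apply_zero_of_periodic {p : ℕ} [Fact p.Prime] {α : Type*} {f : ZMod p → α}
    {δ : ZMod p} (hf : Function.Periodic f δ) (hδ : δ ≠ 0) (x : ZMod p) : f x = f 0 := by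
  have hx : (x * δ⁻¹).val • δ = x := by
    rw [nsmul_eq_mul, natCast_zmod_val, mul_assoc, inv_mul_cancel₀ hδ, mul_one]
  rw [← hx, ← zero_add ((x * δ⁻¹).val • δ), hf.nsmul]

section ConjugatePair

variable {d : ℕ} [NeZero d] {U V : Matrix (ZMod d) (ZMod d) ℂ} {p₀ q₀ : ZMod d}

lemma apply_eq_om_mul_apply_sub (hU : ∀ i j, i ≠ j + q₀ → U i j = 0)
    (hV : ∀ i j, V i j = stdAddChar (p₀ * j) * V (i - j) 0) (hcomm : U * V = om d • (V * U))
    {m : ZMod d} (hm : V m 0 ≠ 0) (i : ZMod d) :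
    U i (i - q₀) = om d * stdAddChar (p₀ * q₀) * U (i - m) (i - m - q₀) := by
  have h := congrFun₂ hcomm i (i - m - q₀)
  rw [Matrix.smul_apply, mul_apply_of_apply_eq_zero hU, mul_apply_of_apply_eq_zero' hU,
    hV (i - q₀), hV i, show i - q₀ - (i - m - q₀) = m by ring, show i - m - q₀ + q₀ = i - m by ring,
    sub_sub_cancel, smul_eq_mul] at h
  have hψ : stdAddChar (p₀ * (i - m)) = stdAddChar (p₀ * (i - m - q₀)) * stdAddChar (p₀ * q₀) := by
    rw [← AddChar.map_add_eq_mul]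
    ring_nf
  apply mul_right_cancel₀ (mul_ne_zero (stdAddChar_ne_zero (p₀ * (i - m - q₀))) hm)
  linear_combination h + om d * V m 0 * U (i - m) (i - m - q₀) * hψ

lemma periodic_apply_sub_of_mul_eq_om_smul_mul (hU : ∀ i j, i ≠ j + q₀ → U i j = 0)
    (hV : ∀ i j, V i j = stdAddChar (p₀ * j) * V (i - j) 0) (hcomm : U * V = om d • (V * U))
    {m₁ m₂ : ZMod d} (h₁ : V m₁ 0 ≠ 0) (h₂ : V m₂ 0 ≠ 0) :
    Function.Periodic (fun x => U x (x - q₀)) (m₂ - m₁) := by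
  intro x
  have e₁ := apply_eq_om_mul_apply_sub hU hV hcomm h₁ (x + m₂)
  have e₂ := apply_eq_om_mul_apply_sub hU hV hcomm h₂ (x + m₂)
  rw [show x + m₂ - m₁ = x + (m₂ - m₁) by ring] at e₁
  rw [add_sub_cancel_right] at e₂
  exact mul_left_cancel₀ (mul_ne_zero (Complex.exp_ne_zero _) (stdAddChar_ne_zero _))
    (e₁.symm.trans e₂)

end ConjugatePair

theorem no_horizontal_vertical_pair_general (d : ℕ) (hd : Nat.Prime d) [NeZero d]
    (U V : Matrix (ZMod d) (ZMod d) ℂ)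
    (hcomm : U * V = om d • (V * U))
    (hUnp : ¬ ∃ (c : ℂ) (p q : ZMod d), U = c • (Zg d ^ p.val * Xg d ^ q.val))
    (hVnp : ¬ ∃ (c : ℂ) (p q : ZMod d), V = c • (Zg d ^ p.val * Xg d ^ q.val))
    (q₀ p₀ : ZMod d)
    (hUline : ∀ p q : ZMod d, fM d U p q ≠ 0 → q = q₀)
    (hVline : ∀ p q : ZMod d, fM d V p q ≠ 0 → p = p₀) :
    False := by
  have := Fact.mk hd
  have hU : ∀ i j, i ≠ j + q₀ → U i j = 0 := fun i j hij => apply_eq_zero_of_fM_eq_zero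
    fun p => not_not.1 fun h => hij (by rw [← hUline p _ h, add_sub_cancel])
  have hV := apply_eq_of_fM_eq_zero fun p q hp => not_not.1 (hp ∘ hVline p q)
  by_cases hsupp : ∃ m, ∀ m', V m' 0 ≠ 0 → m' = m
  · obtain ⟨m, hm⟩ := hsupp
    refine hVnp ⟨V m 0 * stdAddChar (-(p₀ * m)), p₀, m, eq_smul_Zg_pow_mul_Xg_pow fun i j => ?_⟩
    rw [hV]
    split_ifs with hij
    · subst hij
      rw [add_sub_cancel_left, mul_assoc, ← AddChar.map_add_eq_mul]
      ring_nf
    · rw [show V (i - j) 0 = 0 from not_not.1 fun h => hij (by rw [← hm _ h, add_sub_cancel]),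
        mul_zero]
  · push Not at hsupp
    obtain ⟨m₁, h₁, -⟩ := hsupp 0
    obtain ⟨m₂, h₂, hne⟩ := hsupp m₁
    have hconst := ZMod.apply_eq_apply_zero_of_periodic
      (periodic_apply_sub_of_mul_eq_om_smul_mul hU hV hcomm h₁ h₂) (sub_ne_zero.2 hne)
    refine hUnp ⟨U 0 (0 - q₀), 0, q₀, eq_smul_Zg_pow_mul_Xg_pow fun i j => ?_⟩
    split_ifs with hij
    · simpa [hij] using hconst i
    · exact hU i j hij

/-- No conjugate pair (U,V) of non-Pauli unitaries exists with the Pauli support of U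
contained in a horizontal line and that of V contained in a vertical line. -/
theorem no_horizontal_vertical_pair (d : ℕ) (hd : Nat.Prime d) (hodd : Odd d) [NeZero d]
    (U V : Matrix (ZMod d) (ZMod d) ℂ)
    (hU : U ∈ Matrix.unitaryGroup (ZMod d) ℂ)
    (hV : V ∈ Matrix.unitaryGroup (ZMod d) ℂ)
    (hUd : U ^ d = 1) (hVd : V ^ d = 1)
    (hcomm : U * V = om d • (V * U))
    (hUnp : ¬ ∃ (c : ℂ) (p q : ZMod d), U = c • (Zg d ^ p.val * Xg d ^ q.val))
    (hVnp : ¬ ∃ (c : ℂ) (p q : ZMod d), V = c • (Zg d ^ p.val * Xg d ^ q.val))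
    (q₀ p₀ : ZMod d)
    (hUline : ∀ p q : ZMod d, fM d U p q ≠ 0 → q = q₀)
    (hVline : ∀ p q : ZMod d, fM d V p q ≠ 0 → p = p₀) :
    False :=
  no_horizontal_vertical_pair_general d hd U V hcomm hUnp hVnp q₀ p₀ hUline hVline
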